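/- arXiv:2603.18136 — 3 statements merged into one kernel-verified Lean document; each statement's English description precedes it below -/
import Mathlib

section
/- Let Ω be the standard 2n×2n symplectic form matrix (block matrix [[0, I_n],[−I_n, 0]]), and let Σ be a real symmetric positive definite 2n×2n matrix satisfying the quantum covariance condition, i.e. Σ admits a Williamson decomposition Σ = S D Sᵀ with S symplectic (S Ω Sᵀ = Ω) and D diagonal with D ≥ I/2 (each diagonal entry at least 1/2). Then Σ⁻¹ ≤ 4 Ω Σ Ωᵀ in the Loewner order, and consequently ‖Σ⁻¹‖_op ≤ 4 ‖Σ‖_op. -/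
/-!
From `S Ω Sᵀ = Ω` and `Ω Ωᵀ = 1` one gets `S⁻¹ = Ω Sᵀ Ωᵀ`, and since `D` commutes with `Ω` this
gives `Σ⁻¹ = (ΩS) D⁻¹ (ΩS)ᵀ`, while `Ω Σ Ωᵀ = (ΩS) D (ΩS)ᵀ`. Hence
`4 Ω Σ Ωᵀ - Σ⁻¹ = (ΩS) (4D - D⁻¹) (ΩS)ᵀ`, which is positive semidefinite because `4ν - ν⁻¹ ≥ 0`
for `ν ≥ 1/2`. The norm bound follows: the operator norm is monotone on positive operators (it is
the supremum of the Rayleigh quotient) and invariant under conjugation by the orthogonal `Ω`.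
-/

open Matrix

/-- Operator (spectral) norm of a real square matrix, i.e. the norm of the
associated operator on Euclidean space. -/
noncomputable def opNorm {m : Type*} [Fintype m] [DecidableEq m]
    (M : Matrix m m ℝ) : ℝ :=
  ‖Matrix.toEuclideanCLM (𝕜 := ℝ) M‖

namespace ContinuousLinearMap

variable {𝕜 E : Type*} [RCLike 𝕜] [NormedAddCommGroup E] [InnerProductSpace 𝕜 E] [CompleteSpace E]

theorem norm_le_norm_of_nonneg_of_le {T U : E →L[𝕜] E} (hT : 0 ≤ T) (hTU : T ≤ U) :
    ‖T‖ ≤ ‖U‖ := by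
  rw [nonneg_iff_isPositive] at hT
  rw [le_def] at hTU
  rw [norm_eq_iSup_rayleighQuotient T hT.isSelfAdjoint.isSymmetric]
  refine ciSup_le fun x => ?_
  have hle : T.rayleighQuotient x ≤ U.rayleighQuotient x := by
    have h := hTU.re_inner_nonneg_left x
    simp only [_root_.sub_apply, inner_sub_left, map_sub, sub_nonneg] at h
    exact div_le_div_of_nonneg_right h (by positivity)
  calc |T.rayleighQuotient x| = T.rayleighQuotient x :=
        abs_of_nonneg (div_nonneg (hT.re_inner_nonneg_left x) (by positivity))
    _ ≤ U.rayleighQuotient x := hle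
    _ ≤ ‖U‖ := (le_abs_self _).trans (U.rayleighQuotient_le_norm x)

end ContinuousLinearMap

open scoped ComplexOrder in
theorem Matrix.isPositive_toEuclideanCLM_iff {𝕜 n : Type*} [RCLike 𝕜] [Fintype n] [DecidableEq n]
    {M : Matrix n n 𝕜} : (toEuclideanCLM (n := n) (𝕜 := 𝕜) M).IsPositive ↔ M.PosSemidef := by
  rw [← ContinuousLinearMap.isPositive_toLinearMap_iff, coe_toEuclideanCLM_eq_toEuclideanLin,
    isPositive_toEuclideanLin_iff]

section OpNorm

open scoped Matrix.Norms.L2Operator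

variable {m : Type*} [Fintype m] [DecidableEq m]

theorem opNorm_smul (c : ℝ) (M : Matrix m m ℝ) : opNorm (c • M) = |c| * opNorm M :=
  norm_smul c M

theorem opNorm_mul_mul_transpose_of_mul_transpose_eq_one {U : Matrix m m ℝ} (hU : U * Uᵀ = 1)
    (M : Matrix m m ℝ) : opNorm (U * M * Uᵀ) = opNorm M := by
  have hstar : star U = Uᵀ := conjTranspose_eq_transpose_of_trivial U
  have hUu : U ∈ unitary (Matrix m m ℝ) :=
    Unitary.mem_iff.2 ⟨by rw [hstar]; exact mul_eq_one_comm.mp hU, by rw [hstar]; exact hU⟩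
  change ‖U * M * Uᵀ‖ = ‖M‖
  rw [← hstar, CStarRing.norm_mul_mem_unitary _ (Unitary.star_mem hUu),
    CStarRing.norm_mem_unitary_mul _ hUu]

theorem opNorm_le_opNorm_of_posSemidef {A B : Matrix m m ℝ} (hA : A.PosSemidef)
    (hAB : (B - A).PosSemidef) : opNorm A ≤ opNorm B := by
  refine ContinuousLinearMap.norm_le_norm_of_nonneg_of_le
    ((ContinuousLinearMap.nonneg_iff_isPositive _).2 (isPositive_toEuclideanCLM_iff.2 hA)) ?_
  rw [ContinuousLinearMap.le_def, ← map_sub]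
  exact isPositive_toEuclideanCLM_iff.2 hAB

end OpNorm

section Symplectic

variable {m R : Type*} [Fintype m] [DecidableEq m] [CommRing R] {Ω S D : Matrix m m R}

theorem transpose_mul_mul_eq_of_mul_mul_transpose_eq (hΩ : Ω * Ωᵀ = 1)
    (hS : S * Ω * Sᵀ = Ω) : Sᵀ * Ω * S = Ω := by
  have hSinv : Ω * Sᵀ * Ωᵀ * S = 1 := mul_eq_one_comm.mp <| by
    rw [← Matrix.mul_assoc, ← Matrix.mul_assoc, hS, hΩ]
  have hSΩT : Sᵀ * Ωᵀ * S = Ωᵀ := by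
    calc Sᵀ * Ωᵀ * S = Ωᵀ * (Ω * Sᵀ * Ωᵀ * S) := by
          rw [← mul_assoc, ← mul_assoc, ← mul_assoc, mul_eq_one_comm.mp hΩ, one_mul, mul_assoc]
      _ = Ωᵀ := by rw [hSinv, mul_one]
  simpa [Matrix.mul_assoc] using congrArg transpose hSΩT

theorem inv_mul_mul_transpose_of_mul_mul_transpose_eq (hΩ : Ω * Ωᵀ = 1)
    (hS : S * Ω * Sᵀ = Ω) (hΩD : Commute Ω D) (hD : IsUnit D.det) :
    (S * D * Sᵀ)⁻¹ = Ω * S * D⁻¹ * (Ω * S)ᵀ := by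
  refine inv_eq_right_inv ?_
  calc S * D * Sᵀ * (Ω * S * D⁻¹ * (Ω * S)ᵀ)
      = S * D * (Sᵀ * Ω * S) * D⁻¹ * Sᵀ * Ωᵀ := by simp only [transpose_mul, Matrix.mul_assoc]
    _ = S * Ω * (D * D⁻¹) * Sᵀ * Ωᵀ := by
        rw [transpose_mul_mul_eq_of_mul_mul_transpose_eq hΩ hS, Matrix.mul_assoc S D Ω, ← hΩD.eq]
        simp only [Matrix.mul_assoc]
    _ = 1 := by rw [mul_nonsing_inv D hD, Matrix.mul_one, hS, hΩ]

end Symplectic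

section StandardSymplecticForm

variable {l R : Type*} [Fintype l] [DecidableEq l] [CommRing R]

theorem fromBlocks_zero_one_neg_one_zero_mul_transpose :
    (fromBlocks 0 1 (-1) 0 : Matrix (l ⊕ l) (l ⊕ l) R) * (fromBlocks 0 1 (-1) 0)ᵀ = 1 := by
  simp [fromBlocks_transpose, fromBlocks_multiply, ← fromBlocks_one]

theorem commute_fromBlocks_zero_one_neg_one_zero_diagonal_sum_elim (d : l → R) :
    Commute (fromBlocks 0 1 (-1) 0 : Matrix (l ⊕ l) (l ⊕ l) R) (diagonal (Sum.elim d d)) := by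
  simp [Commute, SemiconjBy, ← fromBlocks_diagonal, fromBlocks_multiply]

end StandardSymplecticForm

theorem posSemidef_four_smul_diagonal_sub_inv {m : Type*} [Fintype m] [DecidableEq m]
    {d : m → ℝ} (hd : ∀ i, 1 / 2 ≤ d i) :
    ((4 : ℝ) • diagonal d - (diagonal d)⁻¹).PosSemidef := by
  have hd0 : ∀ i, 0 < d i := fun i => lt_of_lt_of_le (by norm_num) (hd i)
  have hinv : (diagonal d)⁻¹ = diagonal d⁻¹ :=
    inv_eq_right_inv (by simp [diagonal_mul_diagonal, fun i => (hd0 i).ne'])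
  rw [hinv, ← diagonal_smul, diagonal_sub, posSemidef_diagonal_iff]
  intro i
  have : (d i)⁻¹ ≤ 2 := by rw [inv_le_comm₀ (hd0 i) two_pos]; simpa using hd i
  simp only [Pi.smul_apply, Pi.inv_apply, smul_eq_mul, sub_nonneg]
  linarith [hd i]

/-- If Sig is symmetric positive definite with Williamson decomposition
Sig = S D Sᵀ, S symplectic and D = diag(ν,ν) with ν ≥ 1/2, then
Sig⁻¹ ≤ 4 Ω Sig Ωᵀ in the Loewner order and ‖Sig⁻¹‖_op ≤ 4 ‖Sig‖_op,
where Ω = [[0, I],[−I, 0]] is the standard symplectic form. -/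
theorem williamson_inv_le (n : ℕ) (Sig : Matrix (Fin n ⊕ Fin n) (Fin n ⊕ Fin n) ℝ)
    (Ω : Matrix (Fin n ⊕ Fin n) (Fin n ⊕ Fin n) ℝ)
    (hΩ : Ω = Matrix.fromBlocks 0 1 (-1) 0)
    (hSig : Sig.PosDef)
    (hW : ∃ (S : Matrix (Fin n ⊕ Fin n) (Fin n ⊕ Fin n) ℝ) (ν : Fin n → ℝ),
      S * Ω * Sᵀ = Ω ∧ (∀ i, (1:ℝ)/2 ≤ ν i) ∧
      Sig = S * Matrix.diagonal (Sum.elim ν ν) * Sᵀ) :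
    ((4 : ℝ) • (Ω * Sig * Ωᵀ) - Sig⁻¹).PosSemidef ∧
      opNorm Sig⁻¹ ≤ 4 * opNorm Sig := by
  obtain ⟨S, ν, hS, hν, hdecomp⟩ := hW
  set D := diagonal (Sum.elim ν ν)
  have hΩΩT : Ω * Ωᵀ = 1 := hΩ ▸ fromBlocks_zero_one_neg_one_zero_mul_transpose
  have hνν : ∀ i, 1 / 2 ≤ Sum.elim ν ν i := Sum.forall.2 ⟨hν, hν⟩
  have hD : IsUnit D.det := by
    rw [← isUnit_iff_isUnit_det, isUnit_diagonal, Pi.isUnit_iff]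
    exact fun i => (lt_of_lt_of_le (by norm_num) (hνν i)).ne'.isUnit
  have hinv : Sig⁻¹ = Ω * S * D⁻¹ * (Ω * S)ᵀ :=
    hdecomp ▸ inv_mul_mul_transpose_of_mul_mul_transpose_eq hΩΩT hS
      (hΩ ▸ commute_fromBlocks_zero_one_neg_one_zero_diagonal_sum_elim ν) hD
  have hloewner : (4 : ℝ) • (Ω * Sig * Ωᵀ) - Sig⁻¹ = Ω * S * ((4 : ℝ) • D - D⁻¹) * (Ω * S)ᵀ := by
    rw [hinv, hdecomp, transpose_mul]
    simp only [Matrix.mul_sub, Matrix.sub_mul, Matrix.mul_smul, Matrix.smul_mul, Matrix.mul_assoc]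
  have hpsd : ((4 : ℝ) • (Ω * Sig * Ωᵀ) - Sig⁻¹).PosSemidef := by
    rw [hloewner, ← conjTranspose_eq_transpose_of_trivial]
    exact (posSemidef_four_smul_diagonal_sub_inv hνν).mul_mul_conjTranspose_same _
  refine ⟨hpsd, ?_⟩
  calc opNorm Sig⁻¹ ≤ opNorm ((4 : ℝ) • (Ω * Sig * Ωᵀ)) :=
        opNorm_le_opNorm_of_posSemidef hSig.inv.posSemidef hpsd
    _ = 4 * opNorm Sig := by
        rw [opNorm_smul, opNorm_mul_mul_transpose_of_mul_transpose_eq_one hΩΩT, abs_of_pos four_pos]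
end

section
/- Every 2×2 real symmetric positive definite matrix V has a unique symplectic eigenvalue, equal to sqrt(det V); i.e., there exists a 2×2 real symplectic matrix S (satisfying S J Sᵀ = J for J = [[0,1],[−1,0]]) with V = S · (sqrt(det V)·I₂) · Sᵀ. -/
/-!
For a 2 × 2 matrix `S` one has `S J Sᵀ = (det S) J`, so the symplectic 2 × 2 matrices are exactly
those of determinant one. Writing `d = √(det V)`, the positive square root `R = √V` satisfies
`R Rᵀ = V` and `det R = d`, hence `S = d^(-1/2) R` has determinant one and `d S Sᵀ = V`.
-/

open Matrix
open scoped MatrixOrder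

theorem Matrix.mul_symplecticForm_mul_transpose_fin_two {R : Type*} [CommRing R]
    (S : Matrix (Fin 2) (Fin 2) R) :
    S * !![(0 : R), 1; -1, 0] * Sᵀ = S.det • !![(0 : R), 1; -1, 0] := by
  ext i j
  fin_cases i <;> fin_cases j <;> simp [det_fin_two, mul_apply, Fin.sum_univ_two] <;> ring

theorem Matrix.PosSemidef.exists_mul_transpose_self_eq_det_eq_sqrt {n : Type*} [Fintype n]
    [DecidableEq n] {V : Matrix n n ℝ} (hV : V.PosSemidef) :
    ∃ R : Matrix n n ℝ, R * Rᵀ = V ∧ R.det = √V.det := by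
  refine ⟨CFC.sqrt V, ?_, ?_⟩
  · have hR : IsSelfAdjoint (CFC.sqrt V) := (CFC.sqrt_nonneg V).isSelfAdjoint
    rw [← conjTranspose_eq_transpose_of_trivial, ← star_eq_conjTranspose, hR.star_eq]
    exact CFC.sqrt_mul_sqrt_self V hV.nonneg
  · simpa using hV.det_sqrt

/-- Every 2×2 real symmetric positive definite matrix V has symplectic
eigenvalue √(det V): there is a real symplectic S (S J Sᵀ = J for
J = [[0,1],[−1,0]]) with V = S · (√(det V)·I₂) · Sᵀ. -/
theorem williamson_two_dim (V : Matrix (Fin 2) (Fin 2) ℝ)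
    (hV : V.PosDef) :
    ∃ S : Matrix (Fin 2) (Fin 2) ℝ,
      S * !![(0:ℝ), 1; -1, 0] * Sᵀ = !![(0:ℝ), 1; -1, 0] ∧
      V = S * (Real.sqrt V.det • (1 : Matrix (Fin 2) (Fin 2) ℝ)) * Sᵀ := by
  obtain ⟨R, hRRt, hRdet⟩ := hV.posSemidef.exists_mul_transpose_self_eq_det_eq_sqrt
  set d := √V.det
  have hd : 0 < d := Real.sqrt_pos.mpr hV.det_pos
  have hscale : (√d)⁻¹ ^ 2 * d = 1 := by
    rw [inv_pow, Real.sq_sqrt hd.le, inv_mul_cancel₀ hd.ne']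
  refine ⟨(√d)⁻¹ • R, ?_, ?_⟩
  · rw [mul_symplecticForm_mul_transpose_fin_two, det_smul, hRdet, Fintype.card_fin, hscale,
      one_smul]
  · simp only [transpose_smul, smul_mul, mul_smul_comm, mul_one, hRRt, smul_smul]
    rw [show (√d)⁻¹ * (d * (√d)⁻¹) = 1 by linear_combination hscale, one_smul]
end

section
/- For all real a, b > 0, (1/π) · ∫₀^π [a·b·(a + b·cos²φ + b⁻¹·sin²φ)] / [(a + b)² + (a² − 1)(b² − 1)·sin²φ] dφ = a/(1 + a). -/
/-!
After `cos² + sin² = 1` the integrand is `(α cos² φ + β sin² φ) / r(φ)²` with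
`α = ab(a+b)`, `β = a(ab+1)`, where `r(φ)² = p² cos² φ + q² sin² φ` is the squared radius of the
ellipse point `(p cos φ, q sin φ)`, `p = a + b`, `q = ab + 1`. The polar angle `θ` of that point
satisfies `dθ/dφ = pq / r²` (Kepler's area law), so `∫₀^π dφ / r² = π / (pq)`; and since
`(q² - p²) sin² φ = r² - p²`, also `∫₀^π sin² φ / r² = π / (q (p + q))`. Together these give
`∫₀^π (α cos² + β sin²) / r² = π (α/p + β/q) / (p + q)`, and `p + q = (a + 1)(b + 1)`.
-/

open Real MeasureTheory

section EllipseIntegrals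

variable {p q : ℝ}

lemma mul_cos_sq_add_mul_sin_sq_pos (hp : 0 < p) (hq : 0 < q) (φ : ℝ) :
    0 < p * cos φ ^ 2 + q * sin φ ^ 2 := by
  have h := sin_sq_add_cos_sq φ
  rcases le_total p q with hpq | hqp
  · nlinarith [mul_nonneg (sub_nonneg.2 hpq) (sq_nonneg (sin φ)), sq_nonneg (cos φ)]
  · nlinarith [mul_nonneg (sub_nonneg.2 hqp) (sq_nonneg (cos φ)), sq_nonneg (sin φ)]

noncomputable def ellipseRadiusSq (p q φ : ℝ) : ℝ :=
  p ^ 2 * cos φ ^ 2 + q ^ 2 * sin φ ^ 2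

lemma ellipseRadiusSq_pos (hp : 0 < p) (hq : 0 < q) (φ : ℝ) : 0 < ellipseRadiusSq p q φ :=
  mul_cos_sq_add_mul_sin_sq_pos (pow_pos hp 2) (pow_pos hq 2) φ

/-- The polar angle of the point `(p cos φ, q sin φ)`: a continuous branch of
`arctan ((q / p) * tan φ)`. -/
noncomputable def ellipsePolarAngle (p q φ : ℝ) : ℝ :=
  φ + arctan ((q - p) * (sin φ * cos φ) / (p * cos φ ^ 2 + q * sin φ ^ 2))

lemma hasDerivAt_ellipsePolarAngle (hp : 0 < p) (hq : 0 < q) (φ : ℝ) :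
    HasDerivAt (ellipsePolarAngle p q) (p * q / ellipseRadiusSq p q φ) φ := by
  have hM := mul_cos_sq_add_mul_sin_sq_pos hp hq φ
  have hD := ellipseRadiusSq_pos hp hq φ
  have hnum : HasDerivAt (fun x => (q - p) * (sin x * cos x))
      ((q - p) * (cos φ ^ 2 - sin φ ^ 2)) φ :=
    (((hasDerivAt_sin φ).fun_mul (hasDerivAt_cos φ)).const_mul (q - p)).congr_deriv (by ring)
  have hden : HasDerivAt (fun x => p * cos x ^ 2 + q * sin x ^ 2)
      (2 * (q - p) * (sin φ * cos φ)) φ :=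
    ((((hasDerivAt_cos φ).fun_pow 2).const_mul p).fun_add
      (((hasDerivAt_sin φ).fun_pow 2).const_mul q)).congr_deriv (by push_cast; ring)
  refine ((hasDerivAt_id' φ).add (hnum.fun_div hden hM.ne').arctan).congr_deriv ?_
  have hc : cos φ ^ 2 = 1 - sin φ ^ 2 := by linarith [sin_sq_add_cos_sq φ]
  rw [ellipseRadiusSq] at hD ⊢
  field_simp
  rw [hc]
  ring

lemma continuous_div_ellipseRadiusSq {f : ℝ → ℝ} (hf : Continuous f) (hp : 0 < p) (hq : 0 < q) :
    Continuous fun φ => f φ / ellipseRadiusSq p q φ :=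
  hf.div (by unfold ellipseRadiusSq; fun_prop) fun φ => (ellipseRadiusSq_pos hp hq φ).ne'

lemma integral_one_div_ellipseRadiusSq (hp : 0 < p) (hq : 0 < q) :
    ∫ φ in (0 : ℝ)..π, 1 / ellipseRadiusSq p q φ = π / (p * q) := by
  have hderiv (φ : ℝ) : HasDerivAt (fun x => ellipsePolarAngle p q x / (p * q))
      (1 / ellipseRadiusSq p q φ) φ :=
    ((hasDerivAt_ellipsePolarAngle hp hq φ).div_const (p * q)).congr_deriv (by field_simp)
  rw [intervalIntegral.integral_eq_sub_of_hasDerivAt (fun φ _ => hderiv φ)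
    ((continuous_div_ellipseRadiusSq continuous_const hp hq).intervalIntegrable _ _)]
  simp [ellipsePolarAngle]

lemma integral_sin_sq_div_ellipseRadiusSq (hp : 0 < p) (hq : 0 < q) :
    ∫ φ in (0 : ℝ)..π, sin φ ^ 2 / ellipseRadiusSq p q φ = π / (q * (p + q)) := by
  rcases eq_or_ne p q with rfl | hpq
  · have hcircle (φ : ℝ) : ellipseRadiusSq p p φ = p ^ 2 := by
      rw [ellipseRadiusSq, ← mul_add, cos_sq_add_sin_sq, mul_one]
    simp only [hcircle, intervalIntegral.integral_div, integral_sin_sq, sin_zero, sin_pi]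
    field_simp
    ring
  · have hpq2 : q ^ 2 - p ^ 2 ≠ 0 :=
      sub_ne_zero.2 fun h => hpq ((pow_left_inj₀ hp.le hq.le two_ne_zero).1 h.symm)
    have hsplit (φ : ℝ) : sin φ ^ 2 / ellipseRadiusSq p q φ
        = (1 - p ^ 2 * (1 / ellipseRadiusSq p q φ)) / (q ^ 2 - p ^ 2) := by
      have hD := (ellipseRadiusSq_pos hp hq φ).ne'
      have key : (q ^ 2 - p ^ 2) * sin φ ^ 2 = ellipseRadiusSq p q φ - p ^ 2 := by
        rw [ellipseRadiusSq]
        linear_combination -p ^ 2 * sin_sq_add_cos_sq φ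
      field_simp
      linear_combination key
    calc _ = ∫ φ in (0 : ℝ)..π, (1 - p ^ 2 * (1 / ellipseRadiusSq p q φ)) / (q ^ 2 - p ^ 2) := by
          simp only [hsplit]
      _ = (π - p ^ 2 * (π / (p * q))) / (q ^ 2 - p ^ 2) := by
          rw [intervalIntegral.integral_div, intervalIntegral.integral_sub,
            intervalIntegral.integral_const_mul, integral_one_div_ellipseRadiusSq hp hq]
          · simp
          · exact intervalIntegrable_const
          · exact ((continuous_div_ellipseRadiusSq continuous_const hp hq).intervalIntegrable
              _ _).const_mul _
      _ = π / (q * (p + q)) := by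
          field_simp
          ring

lemma integral_mul_cos_sq_add_mul_sin_sq_div_ellipseRadiusSq (α β : ℝ) (hp : 0 < p) (hq : 0 < q) :
    ∫ φ in (0 : ℝ)..π, (α * cos φ ^ 2 + β * sin φ ^ 2) / ellipseRadiusSq p q φ
      = π * (α / p + β / q) / (p + q) := by
  have hsplit (φ : ℝ) : (α * cos φ ^ 2 + β * sin φ ^ 2) / ellipseRadiusSq p q φ
      = α * (1 / ellipseRadiusSq p q φ) + (β - α) * (sin φ ^ 2 / ellipseRadiusSq p q φ) := by
    rw [← mul_div_assoc, ← mul_div_assoc, ← add_div]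
    congr 1
    linear_combination α * cos_sq_add_sin_sq φ
  have hint {f : ℝ → ℝ} (hf : Continuous f) (c : ℝ) :
      IntervalIntegrable (fun φ => c * (f φ / ellipseRadiusSq p q φ)) volume 0 π :=
    ((continuous_div_ellipseRadiusSq hf hp hq).intervalIntegrable _ _).const_mul c
  simp only [hsplit]
  rw [intervalIntegral.integral_add (hint continuous_const α) (hint (by fun_prop) (β - α)),
    intervalIntegral.integral_const_mul, intervalIntegral.integral_const_mul,
    integral_one_div_ellipseRadiusSq hp hq, integral_sin_sq_div_ellipseRadiusSq hp hq]
  field_simp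
  ring

end EllipseIntegrals

/-- For a, b > 0:
(1/π)·∫₀^π [ab(a + b cos²φ + b⁻¹ sin²φ)] / [(a+b)² + (a²−1)(b²−1) sin²φ] dφ
  = a/(1+a). -/
theorem homodyne_angle_average (a b : ℝ) (ha : 0 < a) (hb : 0 < b) :
    (1 / π) * ∫ φ in (0:ℝ)..π,
        (a * b * (a + b * (Real.cos φ) ^ 2 + b⁻¹ * (Real.sin φ) ^ 2)) /
          ((a + b) ^ 2 + (a ^ 2 - 1) * (b ^ 2 - 1) * (Real.sin φ) ^ 2)
      = a / (1 + a) := by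
  have hP : 0 < a + b := by positivity
  have hQ : 0 < a * b + 1 := by positivity
  have hintegrand (φ : ℝ) :
      a * b * (a + b * cos φ ^ 2 + b⁻¹ * sin φ ^ 2)
          / ((a + b) ^ 2 + (a ^ 2 - 1) * (b ^ 2 - 1) * sin φ ^ 2)
        = (a * b * (a + b) * cos φ ^ 2 + a * (a * b + 1) * sin φ ^ 2)
          / ellipseRadiusSq (a + b) (a * b + 1) φ := by
    have h := cos_sq_add_sin_sq φ
    rw [ellipseRadiusSq]
    congr 1
    · field_simp
      linear_combination -a * b * h
    · linear_combination -(a + b) ^ 2 * h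
  simp only [hintegrand, integral_mul_cos_sq_add_mul_sin_sq_div_ellipseRadiusSq _ _ hP hQ]
  field_simp
  ring
end
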